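/- arXiv:1611.03039 — 6 statements merged into one kernel-verified Lean document; each statement's English description precedes it below -/
import Mathlib

section
/- Let V be a finite-dimensional real inner product space. Let S : ℝ → (V →L[ℝ] V) be differentiable, with S(t) self-adjoint and invertible for every t. Let ε, σ, σ̃ : ℝ → V with ε and σ differentiable, and suppose that for every t, σ'(t) = (S(t))⁻¹(ε'(t)) + σ̃(t). Then for every t, the function t ↦ (1/2)⟨σ(t), S(t)σ(t)⟩ is differentiable and its derivative equals ⟨σ(t), ε'(t)⟩ + ⟨σ(t), S(t)σ̃(t)⟩ + (1/2)⟨σ(t), S'(t)σ(t)⟩. -/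
open scoped RealInnerProductSpace

theorem HasDerivAt.inner_apply_self_of_isSymmetric
    {V : Type*} [NormedAddCommGroup V] [InnerProductSpace ℝ V]
    {S : ℝ → V →L[ℝ] V} {S' : V →L[ℝ] V} {σ : ℝ → V} {σ' : V} {t : ℝ}
    (hS : HasDerivAt S S' t) (hσ : HasDerivAt σ σ' t)
    (hsymm : (S t : V →ₗ[ℝ] V).IsSymmetric) :
    HasDerivAt (fun u => ⟪σ u, S u (σ u)⟫) (2 * ⟪σ t, S t σ'⟫ + ⟪σ t, S' (σ t)⟫) t := by
  refine (hσ.inner ℝ (hS.clm_apply hσ)).congr_deriv ?_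
  have hswap : ⟪σ', S t (σ t)⟫ = ⟪σ t, S t σ'⟫ :=
    (hsymm σ' (σ t)).symm.trans (real_inner_comm _ _)
  rw [inner_add_right, hswap]
  ring

theorem work_density_decomposition_general
    {V : Type*} [NormedAddCommGroup V] [InnerProductSpace ℝ V]
    (S : ℝ → (V →L[ℝ] V)) (hS : Differentiable ℝ S)
    (hSsa : ∀ t, ∀ x y : V, ⟪S t x, y⟫ = ⟪x, S t y⟫)
    (hSinv : ∀ t, IsUnit (S t))
    (ε σ σt : ℝ → V) (hσ : Differentiable ℝ σ)
    (hrel : ∀ t, deriv σ t = Ring.inverse (S t) (deriv ε t) + σt t) :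
    ∀ t : ℝ, HasDerivAt (fun u => (1 / 2 : ℝ) * ⟪σ u, S u (σ u)⟫)
      (⟪σ t, deriv ε t⟫ + ⟪σ t, S t (σt t)⟫ + (1 / 2) * ⟪σ t, (deriv S t) (σ t)⟫) t := by
  intro t
  have hS_inv_apply : S t (Ring.inverse (S t) (deriv ε t)) = deriv ε t :=
    DFunLike.congr_fun (Ring.mul_inverse_cancel _ (hSinv t)) _
  have hS_deriv_σ : S t (deriv σ t) = deriv ε t + S t (σt t) := by
    rw [hrel t, map_add, hS_inv_apply]
  refine (((hS t).hasDerivAt.inner_apply_self_of_isSymmetric (hσ t).hasDerivAt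
    (hSsa t)).const_mul (1 / 2 : ℝ)).congr_deriv ?_
  rw [hS_deriv_σ, inner_add_right]
  ring

/-- Work density decomposition (Lemma 3.2 core computation): with strain energy density
`e_S(t) = (1/2)⟨σ(t), S(t)σ(t)⟩`, the identity `σ:ε̇ = ė_S + ė_D` holds with
`ė_D(t) = -[⟨σ, Sσ̃⟩ + (1/2)⟨σ, S'σ⟩]`. -/
theorem work_density_decomposition
    {V : Type*} [NormedAddCommGroup V] [InnerProductSpace ℝ V] [FiniteDimensional ℝ V]
    (S : ℝ → (V →L[ℝ] V)) (hS : Differentiable ℝ S)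
    (hSsa : ∀ t, ∀ x y : V, ⟪S t x, y⟫ = ⟪x, S t y⟫)
    (hSinv : ∀ t, IsUnit (S t))
    (ε σ σt : ℝ → V) (hε : Differentiable ℝ ε) (hσ : Differentiable ℝ σ)
    (hrel : ∀ t, deriv σ t = Ring.inverse (S t) (deriv ε t) + σt t) :
    ∀ t : ℝ, HasDerivAt (fun u => (1 / 2 : ℝ) * ⟪σ u, S u (σ u)⟫)
      (⟪σ t, deriv ε t⟫ + ⟪σ t, S t (σt t)⟫ + (1 / 2) * ⟪σ t, (deriv S t) (σ t)⟫) t :=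
  work_density_decomposition_general S hS hSsa hSinv ε σ σt hσ hrel
end

section
/- Let A, C₀, D be real symmetric n×n matrices with A positive semidefinite, C₀ positive definite, D positive semidefinite, A*C₀ = C₀*A, and A*D = D*A. For any t ∈ ℝ, the matrix exp(-t•A)*C₀ is invertible; set S = (exp(-t•A)*C₀)⁻¹. Then the matrix A*S + S*exp(t•A)*D*S is positive semidefinite, i.e. σᵀ(A*S + S*exp(t•A)*D*S)σ ≥ 0 for every vector σ. -/
/-!
Everything in sight commutes with `A`, and a product of two commuting positive semidefinite
matrices is positive semidefinite. Hence `exp (-t • A) * C₀` and its inverse `S` are positive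
semidefinite and commute with `A`, so `A * S ≥ 0`, while `S * exp (t • A) * D * S` is the
congruence of `exp (t • A) * D ≥ 0` by the symmetric matrix `S`.
-/

open NormedSpace Matrix
open scoped MatrixOrder ComplexOrder

namespace Matrix

variable {m : Type*} [Fintype m] [DecidableEq m]

theorem Commute.nonsing_inv_right {R : Type*} [CommRing R] {A B : Matrix m m R}
    (h : Commute A B) : Commute A B⁻¹ := by
  by_cases hB : IsUnit B
  · rw [← hB.unit_spec, ← coe_units_inv]
    exact h.units_inv_right
  · rw [nonsing_inv_apply_not_isUnit _ ((isUnit_iff_isUnit_det B).not.mp hB)]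
    exact Commute.zero_right A

theorem PosSemidef.mul_of_commute {𝕜 : Type*} [RCLike 𝕜] {P Q : Matrix m m 𝕜}
    (hP : P.PosSemidef) (hQ : Q.PosSemidef) (h : Commute P Q) : (P * Q).PosSemidef :=
  (h.mul_nonneg hP.nonneg hQ.nonneg).posSemidef

theorem IsHermitian.posSemidef_exp {A : Matrix m m ℝ} (hA : A.IsHermitian) :
    (NormedSpace.exp A).PosSemidef := by
  -- `exp` depends only on the topology, so we may borrow the C⋆-algebra structure
  -- of the L² operator norm.
  open scoped Norms.L2Operator in exact (IsSelfAdjoint.exp_nonneg hA).posSemidef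

end Matrix

/-- Remark 4.3: for commuting `A` (symmetric PSD), `C₀` (symmetric PD), `D` (symmetric PSD) with
`A*C₀ = C₀*A` and `A*D = D*A`, the matrix `exp(-t•A)*C₀` is invertible and, with
`S = (exp(-t•A)*C₀)⁻¹`, the matrix `A*S + S*exp(t•A)*D*S` is positive semidefinite. -/
theorem exp_kernel_dissipation_nonneg
    {n : ℕ} (A C₀ D : Matrix (Fin n) (Fin n) ℝ)
    (hA : A.PosSemidef) (hC₀ : C₀.PosDef) (hD : D.PosSemidef)
    (hAC : A * C₀ = C₀ * A) (hAD : A * D = D * A) (t : ℝ) :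
    IsUnit (NormedSpace.exp (-t • A) * C₀) ∧
      ∀ σ : Fin n → ℝ,
        0 ≤ σ ⬝ᵥ ((A * (NormedSpace.exp (-t • A) * C₀)⁻¹
            + (NormedSpace.exp (-t • A) * C₀)⁻¹ * NormedSpace.exp (t • A) * D
              * (NormedSpace.exp (-t • A) * C₀)⁻¹).mulVec σ) := by
  have hexp (s : ℝ) : (exp (s • A)).PosSemidef :=
    (hA.isHermitian.smul (IsSelfAdjoint.all s)).posSemidef_exp
  have hAC' : Commute A C₀ := hAC
  have hAD' : Commute A D := hAD
  set E := exp (-t • A)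
  have hEC : Commute E C₀ := (hAC'.smul_left (-t)).exp_left
  refine ⟨(Matrix.isUnit_exp _).mul hC₀.isUnit, fun σ => ?_⟩
  set S := (E * C₀)⁻¹
  have hS : S.PosSemidef := ((hexp (-t)).mul_of_commute hC₀.posSemidef hEC).inv
  have hAS : Commute A S :=
    ((((Commute.refl A).smul_right (-t)).exp_right).mul_right hAC').nonsing_inv_right
  have hED : (exp (t • A) * D).PosSemidef :=
    (hexp t).mul_of_commute hD (hAD'.smul_left t).exp_left
  have hSEDS : (S * exp (t • A) * D * S).PosSemidef := by
    have h := hED.conjTranspose_mul_mul_same S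
    rwa [hS.isHermitian.eq, ← Matrix.mul_assoc] at h
  exact ((hA.mul_of_commute hS hAS).add hSEDS).dotProduct_mulVec_nonneg σ
end

section
/- Let λ, μ, γ, τ > 0 be real numbers, let ε, σ_λ, σ_μ : ℝ → Matrix (Fin 3) (Fin 3) ℝ be differentiable functions satisfying σ_λ'(t) = λ·ε'(t) - (1/γ)·σ_λ(t) and σ_μ'(t) = μ·ε'(t) - (1/τ)·σ_μ(t) for all t. Define σ(t) = trace(σ_λ(t))·I + 2·σ_μ(t) and e_S(t) = (1/μ)‖σ_μ(t)‖_F² + (1/(2λ))(trace σ_λ(t))². Then for every t, e_S is differentiable at t and ⟨σ(t), ε'(t)⟩_F - e_S'(t) = (2/(μτ))‖σ_μ(t)‖_F² + (1/(λγ))(trace σ_λ(t))². -/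
/-!
Differentiating `e_S` and substituting the two relaxation laws gives
`e_S' = 2⟨σ_μ, ε'⟩_F + tr σ_λ · tr ε' - (2/(μτ))‖σ_μ‖_F² - (1/(λγ))(tr σ_λ)²`,
while `⟨tr(σ_λ) I + 2σ_μ, ε'⟩_F = tr σ_λ · tr ε' + 2⟨σ_μ, ε'⟩_F`;
the work terms cancel in the difference.
-/

open Finset

/-- The Frobenius inner product of real square matrices: `⟨A,B⟩_F = ∑ᵢⱼ AᵢⱼBᵢⱼ = tr(AᵀB)`. -/
def frobInner {n : ℕ} (A B : Matrix (Fin n) (Fin n) ℝ) : ℝ :=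
  ∑ i, ∑ j, A i j * B i j

section FrobeniusInner

variable {n : ℕ}

theorem frobInner_comm (A B : Matrix (Fin n) (Fin n) ℝ) : frobInner A B = frobInner B A := by
  simp only [frobInner, mul_comm]

theorem frobInner_add_left (A B C : Matrix (Fin n) (Fin n) ℝ) :
    frobInner (A + B) C = frobInner A C + frobInner B C := by
  simp only [frobInner, Matrix.add_apply, add_mul, sum_add_distrib]

theorem frobInner_sub_right (A B C : Matrix (Fin n) (Fin n) ℝ) :
    frobInner A (B - C) = frobInner A B - frobInner A C := by
  simp only [frobInner, Matrix.sub_apply, mul_sub, sum_sub_distrib]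

theorem frobInner_smul_left (c : ℝ) (A B : Matrix (Fin n) (Fin n) ℝ) :
    frobInner (c • A) B = c * frobInner A B := by
  simp only [frobInner, Matrix.smul_apply, smul_eq_mul, mul_sum, mul_assoc]

theorem frobInner_smul_right (c : ℝ) (A B : Matrix (Fin n) (Fin n) ℝ) :
    frobInner A (c • B) = c * frobInner A B := by
  rw [frobInner_comm, frobInner_smul_left, frobInner_comm]

theorem frobInner_one_left (A : Matrix (Fin n) (Fin n) ℝ) : frobInner 1 A = A.trace := by
  simp [frobInner, Matrix.one_apply, Matrix.trace]

end FrobeniusInner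

section MatrixDerivatives

variable {t : ℝ}

theorem HasDerivAt.matrix_apply {ι κ : Type*} [Fintype κ] {A : ℝ → Matrix ι κ ℝ}
    {A' : Matrix ι κ ℝ} (hA : HasDerivAt (fun u => Matrix.of.symm (A u)) (Matrix.of.symm A') t)
    (i : ι) (j : κ) : HasDerivAt (fun u => A u i j) (A' i j) t :=
  hasDerivAt_pi.mp (hasDerivAt_pi.mp hA i) j

theorem HasDerivAt.matrix_trace {ι : Type*} [Fintype ι] {A : ℝ → Matrix ι ι ℝ}
    {A' : Matrix ι ι ℝ} (hA : HasDerivAt (fun u => Matrix.of.symm (A u)) (Matrix.of.symm A') t) :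
    HasDerivAt (fun u => (A u).trace) A'.trace t :=
  HasDerivAt.fun_sum fun i _ => hA.matrix_apply i i

theorem HasDerivAt.frobInner {n : ℕ} {A B : ℝ → Matrix (Fin n) (Fin n) ℝ}
    {A' B' : Matrix (Fin n) (Fin n) ℝ}
    (hA : HasDerivAt (fun u => Matrix.of.symm (A u)) (Matrix.of.symm A') t)
    (hB : HasDerivAt (fun u => Matrix.of.symm (B u)) (Matrix.of.symm B') t) :
    HasDerivAt (fun u => frobInner (A u) (B u)) (frobInner A' (B t) + frobInner (A t) B') t := by
  simp only [_root_.frobInner, ← sum_add_distrib]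
  exact HasDerivAt.fun_sum fun i _ => HasDerivAt.fun_sum fun j _ =>
    (hA.matrix_apply i j).mul (hB.matrix_apply i j)

end MatrixDerivatives

theorem exp_convolution_work_density_general
    (l m γ τ : ℝ) (hl : 0 < l) (hm : 0 < m)
    (εd σl σm : ℝ → Matrix (Fin 3) (Fin 3) ℝ)
    (hσl : ∀ t, HasDerivAt (fun u => Matrix.of.symm (σl u))
      (Matrix.of.symm (l • εd t - (1 / γ) • σl t)) t)
    (hσm : ∀ t, HasDerivAt (fun u => Matrix.of.symm (σm u))
      (Matrix.of.symm (m • εd t - (1 / τ) • σm t)) t) :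
    ∀ t : ℝ,
      HasDerivAt
        (fun u => (1 / m) * frobInner (σm u) (σm u) + (1 / (2 * l)) * ((σl u).trace) ^ 2)
        (frobInner ((σl t).trace • (1 : Matrix (Fin 3) (Fin 3) ℝ) + (2 : ℝ) • σm t) (εd t)
          - ((2 / (m * τ)) * frobInner (σm t) (σm t) + (1 / (l * γ)) * ((σl t).trace) ^ 2))
        t := by
  intro t
  have hσm_sq := (hσm t).frobInner (hσm t)
  have hσl_sq := (hσl t).matrix_trace.fun_pow 2
  refine ((hσm_sq.const_mul (1 / m)).fun_add (hσl_sq.const_mul (1 / (2 * l)))).congr_deriv ?_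
  rw [frobInner_comm _ (σm t), frobInner_sub_right, frobInner_smul_right, frobInner_smul_right,
    Matrix.trace_sub, Matrix.trace_smul, Matrix.trace_smul, frobInner_add_left,
    frobInner_smul_left, frobInner_smul_left, frobInner_one_left]
  field_simp
  ring

/-- Work density decomposition for the isotropic stiffness tensor of exponential convolution
type: with `σ = tr(σ_λ)·I + 2σ_μ` and `e_S = (1/μ)‖σ_μ‖_F² + (1/(2λ))(tr σ_λ)²`, one has
`⟨σ, ε'⟩_F - e_S' = (2/(μτ))‖σ_μ‖_F² + (1/(λγ))(tr σ_λ)²`. -/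
theorem exp_convolution_work_density
    (l m γ τ : ℝ) (hl : 0 < l) (hm : 0 < m) (hγ : 0 < γ) (hτ : 0 < τ)
    (ε εd σl σm : ℝ → Matrix (Fin 3) (Fin 3) ℝ)
    (hε : ∀ t, HasDerivAt (fun u => Matrix.of.symm (ε u)) (Matrix.of.symm (εd t)) t)
    (hσl : ∀ t, HasDerivAt (fun u => Matrix.of.symm (σl u))
      (Matrix.of.symm (l • εd t - (1 / γ) • σl t)) t)
    (hσm : ∀ t, HasDerivAt (fun u => Matrix.of.symm (σm u))
      (Matrix.of.symm (m • εd t - (1 / τ) • σm t)) t) :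
    ∀ t : ℝ,
      HasDerivAt
        (fun u => (1 / m) * frobInner (σm u) (σm u) + (1 / (2 * l)) * ((σl u).trace) ^ 2)
        (frobInner ((σl t).trace • (1 : Matrix (Fin 3) (Fin 3) ℝ) + (2 : ℝ) • σm t) (εd t)
          - ((2 / (m * τ)) * frobInner (σm t) (σm t) + (1 / (l * γ)) * ((σl t).trace) ^ 2))
        t :=
  exp_convolution_work_density_general l m γ τ hl hm εd σl σm hσl hσm
end

section
/- For all real numbers α with 0 < α < 1 and a > 0, the improper integral over (0,∞) satisfies ∫₀^∞ (sin(απ)/π) · (aτ)^α / (τ·((aτ)^{2α} + 2(aτ)^α·cos(απ) + 1)) dτ = 1. -/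
/-!
Substituting `s = (aτ)^α` turns the integral into
`(sin(απ) / (απ)) ∫₀^∞ ds / (s² + 2 s cos(απ) + 1)`, and completing the square,
`s² + 2 s cos θ + 1 = (s + cos θ)² + sin² θ`, gives the antiderivative
`arctan((s + cos θ) / sin θ) / sin θ`, whose increment over `(0, ∞)` is `θ / sin θ`.
-/

open Real MeasureTheory Set Filter

lemma sq_add_two_mul_cos_add_one_pos {θ : ℝ} (hθ : sin θ ≠ 0) (s : ℝ) :
    0 < s ^ 2 + 2 * s * cos θ + 1 := by
  have hsquare : s ^ 2 + 2 * s * cos θ + 1 = (s + cos θ) ^ 2 + sin θ ^ 2 := by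
    linear_combination -sin_sq_add_cos_sq θ
  rw [hsquare]
  exact add_pos_of_nonneg_of_pos (sq_nonneg _) (sq_pos_of_ne_zero hθ)

lemma hasDerivAt_inv_sin_mul_arctan {θ : ℝ} (hθ : sin θ ≠ 0) (s : ℝ) :
    HasDerivAt (fun s => (sin θ)⁻¹ * arctan ((s + cos θ) / sin θ))
      (1 / (s ^ 2 + 2 * s * cos θ + 1)) s := by
  have hinner : HasDerivAt (fun s => (s + cos θ) / sin θ) (sin θ)⁻¹ s := by
    simpa using ((hasDerivAt_id s).add_const (cos θ)).div_const (sin θ)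
  refine (((hasDerivAt_arctan _).comp s hinner).const_mul _).congr_deriv ?_
  have hsq : 1 + ((s + cos θ) / sin θ) ^ 2 = (s ^ 2 + 2 * s * cos θ + 1) / sin θ ^ 2 := by
    field_simp
    linear_combination sin_sq_add_cos_sq θ
  rw [hsq]
  field_simp

lemma integral_Ioi_one_div_sq_add_two_mul_cos_add_one {θ : ℝ} (hθ0 : 0 < θ) (hθπ : θ < π) :
    ∫ s in Ioi (0 : ℝ), 1 / (s ^ 2 + 2 * s * cos θ + 1) = θ / sin θ := by
  have hsin : 0 < sin θ := sin_pos_of_pos_of_lt_pi hθ0 hθπ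
  have hderiv := hasDerivAt_inv_sin_mul_arctan hsin.ne'
  have hlim : Tendsto (fun s => (sin θ)⁻¹ * arctan ((s + cos θ) / sin θ)) atTop
      (nhds ((sin θ)⁻¹ * (π / 2))) :=
    ((tendsto_nhds_of_tendsto_nhdsWithin tendsto_arctan_atTop).comp
      ((tendsto_atTop_add_const_right _ _ tendsto_id).atTop_div_const hsin)).const_mul _
  rw [integral_Ioi_of_hasDerivAt_of_nonneg (hderiv 0).continuousAt.continuousWithinAt
    (fun s _ => hderiv s)
    (fun s _ => (one_div_pos.2 (sq_add_two_mul_cos_add_one_pos hsin.ne' s)).le) hlim]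
  have harctan : arctan (cos θ / sin θ) = π / 2 - θ := by
    rw [← sin_pi_div_two_sub θ, ← cos_pi_div_two_sub θ, ← tan_eq_sin_div_cos,
      arctan_tan (by linarith) (by linarith)]
  rw [zero_add, harctan]
  ring

lemma integral_Ioi_rpow_sub_one_div_rpow_two_mul_add {p θ : ℝ} (hp : 0 < p) (hθ0 : 0 < θ)
    (hθπ : θ < π) :
    ∫ x in Ioi (0 : ℝ), x ^ (p - 1) / (x ^ (2 * p) + 2 * x ^ p * cos θ + 1) =
      θ / (p * sin θ) := by
  have hsubst := integral_comp_rpow_Ioi_of_pos (g := fun s => 1 / (s ^ 2 + 2 * s * cos θ + 1)) hp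
  rw [integral_Ioi_one_div_sq_add_two_mul_cos_add_one hθ0 hθπ] at hsubst
  rw [div_mul_eq_div_div_swap, ← hsubst, ← integral_div]
  refine setIntegral_congr_fun measurableSet_Ioi fun x (hx : 0 < x) => ?_
  rw [mul_comm 2 p, rpow_mul hx.le, rpow_two, smul_eq_mul]
  field_simp

/-- The spectral measure of the Mittag-Leffler relaxation kernel in the fractional Zener model
is a probability measure:
`∫₀^∞ (sin(απ)/π)·(aτ)^α / (τ·((aτ)^{2α} + 2(aτ)^α cos(απ) + 1)) dτ = 1`. -/
theorem mittag_leffler_spectral_measure_total_mass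
    (α a : ℝ) (hα0 : 0 < α) (hα1 : α < 1) (ha : 0 < a) :
    ∫ τ in Set.Ioi (0 : ℝ),
        (Real.sin (α * π) / π) * (a * τ) ^ α /
          (τ * ((a * τ) ^ (2 * α) + 2 * (a * τ) ^ α * Real.cos (α * π) + 1)) = 1 := by
  have hθ0 : 0 < α * π := by positivity
  have hθπ : α * π < π := by nlinarith [pi_pos]
  set f : ℝ → ℝ := fun x => x ^ (α - 1) / (x ^ (2 * α) + 2 * x ^ α * cos (α * π) + 1)
  have hscale : ∀ τ ∈ Ioi (0 : ℝ),
      (sin (α * π) / π) * (a * τ) ^ α /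
          (τ * ((a * τ) ^ (2 * α) + 2 * (a * τ) ^ α * cos (α * π) + 1)) =
        (sin (α * π) / π * a) * f (a * τ) := by
    intro τ (hτ : 0 < τ)
    simp only [f]
    rw [rpow_sub_one (mul_pos ha hτ).ne']
    field_simp
  rw [setIntegral_congr_fun measurableSet_Ioi hscale, integral_const_mul,
    integral_comp_mul_left_Ioi f 0 ha, mul_zero, smul_eq_mul,
    integral_Ioi_rpow_sub_one_div_rpow_two_mul_add hα0 hθ0 hθπ]
  have hsin := (sin_pos_of_pos_of_lt_pi hθ0 hθπ).ne'
  field_simp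
end

section
/- Let ρ > 0 and c > 0 be real numbers, n a natural number, (λᵢ)_{i ∈ Fin n} positive real numbers with ∑ᵢ λᵢ ≤ ρc², (σⁱ)_{i ∈ Fin n} real 3×3 matrices, and (qᵢ)_{i ∈ Fin n} real numbers with qᵢ ≥ ‖σⁱ‖_F²/λᵢ for each i. Then for all vectors v, m ∈ EuclideanSpace ℝ (Fin 3) with ‖m‖ ≤ 1: (ρ/2)‖v‖² + ∑ᵢ qᵢ/2 - (1/c)⟨(∑ᵢ σⁱ).mulVec v, m⟩ ≥ 0. -/
/-!
By Cauchy–Schwarz, the triangle inequality and `‖σ v‖ ≤ ‖σ‖_F ‖v‖`, the inner-product term is at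
most `∑ᵢ ‖σⁱ‖_F ‖v‖ / c`. Young's inequality splits each summand into `λᵢ ‖v‖² / (2c²)`, which sum
to at most `ρ ‖v‖² / 2`, and `‖σⁱ‖_F² / (2λᵢ) ≤ qᵢ / 2`.
-/

open Finset
open scoped RealInnerProductSpace

attribute [local instance] Matrix.frobeniusNormedAddCommGroup

namespace Matrix

variable {m n : Type*} [Fintype m] [Fintype n]

theorem frobenius_norm_sq {α : Type*} [NormedAddCommGroup α] (A : Matrix m n α) :
    ‖A‖ ^ 2 = ∑ i, ∑ j, ‖A i j‖ ^ 2 := by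
  rw [frobenius_norm_def, ← Real.rpow_natCast, ← Real.rpow_mul (by positivity)]
  norm_num

theorem frobenius_norm_mulVec_le {𝕜 : Type*} [RCLike 𝕜] (A : Matrix m n 𝕜)
    (v : EuclideanSpace 𝕜 n) : ‖(EuclideanSpace.equiv m 𝕜).symm (A *ᵥ v)‖ ≤ ‖A‖ * ‖v‖ := by
  simpa [← replicateCol_mulVec] using frobenius_norm_mul A (replicateCol Unit (WithLp.ofLp v))

end Matrix

/-- Young's inequality `F y ≤ l y² / 2 + F² / (2 l)`. -/
theorem mul_le_half_mul_sq_add_half {F y l q : ℝ} (hl : 0 < l) (hq : F ^ 2 / l ≤ q) :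
    F * y ≤ l / 2 * y ^ 2 + q / 2 := by
  have hF : F ^ 2 ≤ q * l := (div_le_iff₀ hl).1 hq
  nlinarith [sq_nonneg (l * y - F)]

theorem superposition_lateral_integrand_nonneg_general
    (ρ c : ℝ) (hc : 0 < c) (n : ℕ)
    (lam : Fin n → ℝ) (hlam : ∀ i, 0 < lam i) (hsum : ∑ i, lam i ≤ ρ * c ^ 2)
    (σ : Fin n → Matrix (Fin 3) (Fin 3) ℝ) (q : Fin n → ℝ)
    (hq : ∀ i, q i ≥ (∑ a, ∑ b, (σ i a b) ^ 2) / lam i)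
    (v m : EuclideanSpace ℝ (Fin 3)) (hm : ‖m‖ ≤ 1) :
    0 ≤ (ρ / 2) * ‖v‖ ^ 2 + ∑ i, q i / 2
      - (1 / c) * ⟪(EuclideanSpace.equiv (Fin 3) ℝ).symm ((∑ i, σ i).mulVec v), m⟫ := by
  set x := (EuclideanSpace.equiv (Fin 3) ℝ).symm ((∑ i, σ i).mulVec v)
  set y := ‖v‖ / c
  have hinner : ⟪x, m⟫ ≤ (∑ i, ‖σ i‖) * ‖v‖ :=
    calc ⟪x, m⟫ ≤ ‖x‖ * ‖m‖ := real_inner_le_norm x m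
      _ ≤ ‖x‖ := mul_le_of_le_one_right (norm_nonneg x) hm
      _ ≤ ‖∑ i, σ i‖ * ‖v‖ := Matrix.frobenius_norm_mulVec_le _ v
      _ ≤ (∑ i, ‖σ i‖) * ‖v‖ := by gcongr; exact norm_sum_le _ _
  have hyoung (i : Fin n) : ‖σ i‖ * y ≤ lam i / 2 * y ^ 2 + q i / 2 := by
    refine mul_le_half_mul_sq_add_half (hlam i) ?_
    simpa only [Matrix.frobenius_norm_sq, Real.norm_eq_abs, sq_abs] using hq i
  have hlam_y : (∑ i, lam i) / 2 * y ^ 2 ≤ ρ / 2 * ‖v‖ ^ 2 := by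
    calc (∑ i, lam i) / 2 * y ^ 2 ≤ ρ * c ^ 2 / 2 * y ^ 2 := by gcongr
      _ = ρ / 2 * ‖v‖ ^ 2 := by rw [div_pow]; field_simp
  rw [sub_nonneg]
  calc 1 / c * ⟪x, m⟫ ≤ (∑ i, ‖σ i‖) * y := by
        rw [mul_div_assoc', one_div_mul_eq_div]; gcongr
    _ ≤ ∑ i, (lam i / 2 * y ^ 2 + q i / 2) := by
        rw [sum_mul]; exact sum_le_sum fun i _ ↦ hyoung i
    _ = (∑ i, lam i) / 2 * y ^ 2 + ∑ i, q i / 2 := by rw [sum_add_distrib, sum_div, sum_mul]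
    _ ≤ ρ / 2 * ‖v‖ ^ 2 + ∑ i, q i / 2 := by gcongr

/-- Pointwise nonnegativity of the lateral boundary integrand in the proof of the finite
superposition theorem: if `∑ᵢ λᵢ ≤ ρc²` and `qᵢ ≥ ‖σⁱ‖_F²/λᵢ` for each `i`, then
`(ρ/2)‖v‖² + ∑ᵢ qᵢ/2 - (1/c)⟨(∑ᵢ σⁱ)v, m⟩ ≥ 0` whenever `‖m‖ ≤ 1`. -/
theorem superposition_lateral_integrand_nonneg
    (ρ c : ℝ) (hρ : 0 < ρ) (hc : 0 < c) (n : ℕ)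
    (lam : Fin n → ℝ) (hlam : ∀ i, 0 < lam i) (hsum : ∑ i, lam i ≤ ρ * c ^ 2)
    (σ : Fin n → Matrix (Fin 3) (Fin 3) ℝ) (q : Fin n → ℝ)
    (hq : ∀ i, q i ≥ (∑ a, ∑ b, (σ i a b) ^ 2) / lam i)
    (v m : EuclideanSpace ℝ (Fin 3)) (hm : ‖m‖ ≤ 1) :
    0 ≤ (ρ / 2) * ‖v‖ ^ 2 + ∑ i, q i / 2
      - (1 / c) * ⟪(EuclideanSpace.equiv (Fin 3) ℝ).symm ((∑ i, σ i).mulVec v), m⟫ :=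
  superposition_lateral_integrand_nonneg_general ρ c hc n lam hlam hsum σ q hq v m hm
end

section
/- Let ρ > 0 and c > 0 be real numbers, β a measure on (0,∞), λ : (0,∞) → ℝ a β-integrable function with λ(τ) > 0 for β-almost every τ and ∫ λ dβ ≤ ρc², σ : (0,∞) → Matrix (Fin 3) (Fin 3) ℝ a Bochner β-integrable function, and q : (0,∞) → ℝ a β-integrable function with q(τ) ≥ ‖σ(τ)‖_F²/λ(τ) for β-almost every τ. Then for all vectors v, m ∈ EuclideanSpace ℝ (Fin 3) with ‖m‖ ≤ 1: (ρ/2)‖v‖² + (1/2)∫ q dβ - (1/c)⟨(∫ σ dβ).mulVec v, m⟩ ≥ 0. -/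
/-!
Fix `τ`. Cauchy–Schwarz and `‖σ v‖ ≤ ‖σ‖_F ‖v‖` give
`⟪σ(τ) v, m⟫ / c ≤ ‖σ(τ)‖_F ‖v‖ / c ≤ ‖σ(τ)‖_F² / (2λ(τ)) + λ(τ) ‖v‖² / (2c²)`,
the gap being `(λ/2)(‖v‖/c - ‖σ‖_F/λ)²`, and the Rayleigh bound turns the first term into `q(τ)/2`.
Integrating against `β`, the integral commutes with the linear functional `A ↦ ⟪A v, m⟫`, and
`∫ λ dβ ≤ ρc²` bounds the second term by `ρ‖v‖²/2`.
-/

open MeasureTheory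
open scoped RealInnerProductSpace

open Matrix WithLp
open scoped Matrix.Norms.Frobenius

theorem Matrix.frobenius_norm_sq_eq_sum {m n : Type*} [Fintype m] [Fintype n] (A : Matrix m n ℝ) :
    ‖A‖ ^ 2 = ∑ i, ∑ j, A i j ^ 2 := by
  rw [frobenius_norm_def, ← Real.sqrt_eq_rpow, Real.sq_sqrt (by positivity)]
  simp

theorem Matrix.frobenius_norm_mulVec_le_s17 {m n : Type*} [Fintype m] [Fintype n] (A : Matrix m n ℝ)
    (v : n → ℝ) :
    ‖toLp 2 (A *ᵥ v)‖ ≤ ‖A‖ * ‖toLp 2 v‖ := by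
  simpa only [← frobenius_norm_replicateCol (ι := Unit), replicateCol_mulVec]
    using frobenius_norm_mul A (replicateCol Unit v)

-- Defined on `m → n → ℝ` rather than on `Matrix m n ℝ`, which carries no global norm, so that it
-- can be pulled through Bochner integrals of matrix fields.
noncomputable def Matrix.innerMulVecCLM {m n : Type*} [Fintype m] [Fintype n] (v : n → ℝ)
    (w : EuclideanSpace ℝ m) : (m → n → ℝ) →L[ℝ] ℝ :=
  LinearMap.toContinuousLinearMap
    { toFun A := ⟪toLp 2 (of A *ᵥ v), w⟫
      map_add' A B := by rw [← of_add_of, add_mulVec, toLp_add, inner_add_left]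
      map_smul' r A := by
        rw [← smul_of, smul_mulVec, toLp_smul, real_inner_smul_left, RingHom.id_apply,
          smul_eq_mul] }

theorem Matrix.innerMulVecCLM_apply {m n : Type*} [Fintype m] [Fintype n] (v : n → ℝ)
    (w : EuclideanSpace ℝ m) (A : m → n → ℝ) :
    innerMulVecCLM v w A = ⟪toLp 2 (of A *ᵥ v), w⟫ := rfl

theorem mul_div_le_sq_div_add {l c : ℝ} (hl : 0 < l) (hc : 0 < c) (a b : ℝ) :
    a * b / c ≤ a ^ 2 / (2 * l) + l * b ^ 2 / (2 * c ^ 2) := by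
  rw [div_add_div _ _ (by positivity) (by positivity), div_le_div_iff₀ hc (by positivity)]
  nlinarith [sq_nonneg (c * a - l * b)]

theorem inner_mulVec_div_le {m n : Type*} [Fintype m] [Fintype n] (A : Matrix m n ℝ)
    (v : EuclideanSpace ℝ n) {w : EuclideanSpace ℝ m} (hw : ‖w‖ ≤ 1) {l c : ℝ} (hl : 0 < l)
    (hc : 0 < c) :
    ⟪toLp 2 (A *ᵥ v), w⟫ / c ≤ ‖A‖ ^ 2 / (2 * l) + l * ‖v‖ ^ 2 / (2 * c ^ 2) := by
  have hAv : ⟪toLp 2 (A *ᵥ v), w⟫ ≤ ‖A‖ * ‖v‖ :=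
    calc ⟪toLp 2 (A *ᵥ v), w⟫ ≤ ‖toLp 2 (A *ᵥ v)‖ * ‖w‖ := real_inner_le_norm _ _
      _ ≤ ‖toLp 2 (A *ᵥ v)‖ := mul_le_of_le_one_right (norm_nonneg _) hw
      _ ≤ ‖A‖ * ‖v‖ := by simpa using frobenius_norm_mulVec_le_s17 A v
  calc ⟪toLp 2 (A *ᵥ v), w⟫ / c ≤ ‖A‖ * ‖v‖ / c := by gcongr
    _ ≤ _ := mul_div_le_sq_div_add hl hc _ _

theorem continuous_superposition_lateral_integrand_nonneg_general
    (ρ c : ℝ) (hc : 0 < c)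
    (β : Measure ↥(Set.Ioi (0 : ℝ)))
    (lam : ↥(Set.Ioi (0 : ℝ)) → ℝ) (hlam_int : Integrable lam β)
    (hlam_pos : ∀ᵐ τ ∂β, 0 < lam τ)
    (hlam_sum : ∫ τ, lam τ ∂β ≤ ρ * c ^ 2)
    (σ : ↥(Set.Ioi (0 : ℝ)) → Matrix (Fin 3) (Fin 3) ℝ)
    (hσ_int : Integrable (fun τ => Matrix.of.symm (σ τ)) β)
    (q : ↥(Set.Ioi (0 : ℝ)) → ℝ) (hq_int : Integrable q β)
    (hq : ∀ᵐ τ ∂β, q τ ≥ (∑ a, ∑ b, (σ τ a b) ^ 2) / lam τ)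
    (v m : EuclideanSpace ℝ (Fin 3)) (hm : ‖m‖ ≤ 1) :
    0 ≤ (ρ / 2) * ‖v‖ ^ 2 + (1 / 2) * ∫ τ, q τ ∂β
      - (1 / c) * ⟪(EuclideanSpace.equiv (Fin 3) ℝ).symm
          ((Matrix.of (∫ τ, Matrix.of.symm (σ τ) ∂β)).mulVec v), m⟫ := by
  set T := innerMulVecCLM v m
  have hpointwise : ∀ᵐ τ ∂β, T (of.symm (σ τ)) / c
      ≤ q τ / 2 + lam τ * ‖v‖ ^ 2 / (2 * c ^ 2) := by
    filter_upwards [hlam_pos, hq] with τ hlam hqτ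
    calc _ ≤ ‖σ τ‖ ^ 2 / (2 * lam τ) + lam τ * ‖v‖ ^ 2 / (2 * c ^ 2) :=
          inner_mulVec_div_le (σ τ) v hm hlam hc
      _ ≤ _ := by
        rw [frobenius_norm_sq_eq_sum, mul_comm, ← div_div]
        gcongr
  have hintegral : ∫ τ, T (of.symm (σ τ)) / c ∂β
      ≤ ∫ τ, (q τ / 2 + lam τ * ‖v‖ ^ 2 / (2 * c ^ 2)) ∂β :=
    integral_mono_ae ((T.integrable_comp hσ_int).div_const c)
      ((hq_int.div_const 2).add ((hlam_int.mul_const _).div_const _)) hpointwise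
  rw [integral_div, T.integral_comp_comm hσ_int, integral_add (hq_int.div_const 2)
    ((hlam_int.mul_const _).div_const _), integral_div, integral_div, integral_mul_const]
    at hintegral
  have hlam_bound : (∫ τ, lam τ ∂β) * ‖v‖ ^ 2 / (2 * c ^ 2) ≤ ρ / 2 * ‖v‖ ^ 2 :=
    calc _ ≤ ρ * c ^ 2 * ‖v‖ ^ 2 / (2 * c ^ 2) := by gcongr
      _ = ρ / 2 * ‖v‖ ^ 2 := by field_simp
  rw [innerMulVecCLM_apply] at hintegral
  change 0 ≤ _ - 1 / c * ⟪toLp 2 (of (∫ τ, of.symm (σ τ) ∂β) *ᵥ v), m⟫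
  rw [one_div_mul_eq_div c]
  linarith

/-- Pointwise nonnegativity of the lateral boundary integrand in the proof of the continuous
superposition theorem: for a measure `β` on `(0,∞)`, if `∫ λ dβ ≤ ρc²` with `λ > 0` β-a.e.,
`σ` is Bochner β-integrable and `q(τ) ≥ ‖σ(τ)‖_F²/λ(τ)` β-a.e., then
`(ρ/2)‖v‖² + (1/2)∫ q dβ - (1/c)⟨(∫ σ dβ)v, m⟩ ≥ 0` whenever `‖m‖ ≤ 1`. -/
theorem continuous_superposition_lateral_integrand_nonneg
    (ρ c : ℝ) (hρ : 0 < ρ) (hc : 0 < c)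
    (β : Measure ↥(Set.Ioi (0 : ℝ)))
    (lam : ↥(Set.Ioi (0 : ℝ)) → ℝ) (hlam_int : Integrable lam β)
    (hlam_pos : ∀ᵐ τ ∂β, 0 < lam τ)
    (hlam_sum : ∫ τ, lam τ ∂β ≤ ρ * c ^ 2)
    (σ : ↥(Set.Ioi (0 : ℝ)) → Matrix (Fin 3) (Fin 3) ℝ)
    (hσ_int : Integrable (fun τ => Matrix.of.symm (σ τ)) β)
    (q : ↥(Set.Ioi (0 : ℝ)) → ℝ) (hq_int : Integrable q β)
    (hq : ∀ᵐ τ ∂β, q τ ≥ (∑ a, ∑ b, (σ τ a b) ^ 2) / lam τ)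
    (v m : EuclideanSpace ℝ (Fin 3)) (hm : ‖m‖ ≤ 1) :
    0 ≤ (ρ / 2) * ‖v‖ ^ 2 + (1 / 2) * ∫ τ, q τ ∂β
      - (1 / c) * ⟪(EuclideanSpace.equiv (Fin 3) ℝ).symm
          ((Matrix.of (∫ τ, Matrix.of.symm (σ τ) ∂β)).mulVec v), m⟫ :=
  continuous_superposition_lateral_integrand_nonneg_general ρ c hc β lam hlam_int hlam_pos hlam_sum
    σ hσ_int q hq_int hq v m hm
end
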